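/- For a real number α and a nonzero integer k, define p_5(α, k) := 16(√3 − 1) − [8√3 + 16 + (2 + 4√3)/k²] α + [34 − 6√3 + (24k² + 1)/(2k⁴)] α² − [4√3 − 1 + √3/k²] α³. Then for all α ∈ [0, 1/3] and all integers k with |k| ≥ 1: p_5(α, k) ≥ p_5(α, 1) ≥ 5/2. -/

import Mathlib

/-!
Both inequalities reduce to sign arguments for explicit polynomials. The polynomial `p5 α k`
depends on `k` only through `u = 1 / k ^ 2 ∈ (0, 1]`, and
`p5 α k - p5 α 1 = (1 - u) * ((2 + 4√3) α + √3 α³ - (u + 25) α² / 2)`, whose second factor is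
at least `α (2 + 4√3 - 13 α) ≥ 0` on `[0, 1/3]`. The cubic `p5 α 1` is decreasing on `[0, 1/3]`,
and `p5 (1/3) 1 = 301√3/27 - 907/54 ≥ 5/2` as soon as `√3 ≥ 1.731`.
-/

open Real

noncomputable def p5 (α : ℝ) (k : ℤ) : ℝ :=
  16 * (Real.sqrt 3 - 1)
    - (8 * Real.sqrt 3 + 16 + (2 + 4 * Real.sqrt 3) / (k : ℝ) ^ 2) * α
    + (34 - 6 * Real.sqrt 3 + (24 * (k : ℝ) ^ 2 + 1) / (2 * (k : ℝ) ^ 4)) * α ^ 2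
    - (4 * Real.sqrt 3 - 1 + Real.sqrt 3 / (k : ℝ) ^ 2) * α ^ 3

lemma sqrt_three_le_two : √3 ≤ 2 :=
  Real.sqrt_le_iff.2 ⟨by norm_num, by norm_num⟩

lemma le_sqrt_three : (1.731 : ℝ) ≤ √3 :=
  (Real.le_sqrt (by norm_num) (by norm_num)).2 (by norm_num)

lemma p5_sub_p5_one (α : ℝ) {k : ℤ} (hk : k ≠ 0) :
    p5 α k - p5 α 1 = (1 - 1 / (k : ℝ) ^ 2) *
      ((2 + 4 * √3) * α + √3 * α ^ 3 - (1 / (k : ℝ) ^ 2 + 25) / 2 * α ^ 2) := by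
  have : (k : ℝ) ≠ 0 := Int.cast_ne_zero.2 hk
  simp only [p5]
  push_cast
  field_simp
  ring

lemma p5_one (α : ℝ) :
    p5 α 1 = 16 * √3 - 16 - (12 * √3 + 18) * α + (93 / 2 - 6 * √3) * α ^ 2
      - (5 * √3 - 1) * α ^ 3 := by
  simp only [p5]
  norm_num
  ring

lemma p5_sub_p5_one_factor_nonneg {α u : ℝ} (hα : α ∈ Set.Icc (0 : ℝ) (1 / 3)) (hu : u ≤ 1) :
    0 ≤ (2 + 4 * √3) * α + √3 * α ^ 3 - (u + 25) / 2 * α ^ 2 := by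
  obtain ⟨hα0, hα3⟩ := hα
  have hs := le_sqrt_three
  have : 0 ≤ α * (2 + 4 * √3 - 13 * α) := mul_nonneg hα0 (by linarith)
  nlinarith [pow_nonneg hα0 3, mul_nonneg (sub_nonneg.2 hu) (sq_nonneg α)]

lemma p5_le_p5_of_one_le_abs {α : ℝ} (hα : α ∈ Set.Icc (0 : ℝ) (1 / 3)) {k : ℤ} (hk : 1 ≤ |k|) :
    p5 α 1 ≤ p5 α k := by
  have hk2 : (1 : ℝ) ≤ (k : ℝ) ^ 2 := by
    rw [← sq_abs, ← Int.cast_abs]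
    exact one_le_pow₀ (by exact_mod_cast hk)
  have hu : 1 / (k : ℝ) ^ 2 ≤ 1 := (div_le_one (by positivity)).2 hk2
  have hk0 : k ≠ 0 := abs_pos.1 (by omega)
  rw [← sub_nonneg, p5_sub_p5_one α hk0]
  exact mul_nonneg (sub_nonneg.2 hu) (p5_sub_p5_one_factor_nonneg hα hu)

lemma p5_one_antitoneOn : AntitoneOn (fun α => p5 α 1) (Set.Icc 0 (1 / 3)) := by
  intro a ⟨ha0, ha3⟩ b ⟨hb0, hb3⟩ hab
  have hdiff : p5 a 1 - p5 b 1 = (b - a) * ((12 * √3 + 18) - (93 / 2 - 6 * √3) * (a + b)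
      + (5 * √3 - 1) * (a ^ 2 + a * b + b ^ 2)) := by
    rw [p5_one, p5_one]; ring
  have hs := le_sqrt_three
  have hs2 := sqrt_three_le_two
  have hquad : 0 ≤ (5 * √3 - 1) * (a ^ 2 + a * b + b ^ 2) :=
    mul_nonneg (by linarith) (by positivity)
  have hlin : (93 / 2 - 6 * √3) * (a + b) ≤ (93 / 2 - 6 * √3) * (2 / 3) :=
    mul_le_mul_of_nonneg_left (by linarith) (by linarith)
  show p5 b 1 ≤ p5 a 1
  rw [← sub_nonneg, hdiff]
  exact mul_nonneg (sub_nonneg.2 hab) (by linarith)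

lemma five_halves_le_p5_one {α : ℝ} (hα : α ∈ Set.Icc (0 : ℝ) (1 / 3)) : 5 / 2 ≤ p5 α 1 := by
  have hend : 5 / 2 ≤ p5 (1 / 3) 1 := by
    rw [p5_one]
    linarith [le_sqrt_three]
  exact hend.trans (p5_one_antitoneOn hα ⟨by norm_num, le_rfl⟩ hα.2)

/-- for all `α ∈ [0, 1/3]` and all integers `k` with `|k| ≥ 1`,
`p₅(α,k) ≥ p₅(α,1) ≥ 5/2`. -/
theorem stmt_17 :
    ∀ α : ℝ, α ∈ Set.Icc (0:ℝ) (1/3) → ∀ k : ℤ, 1 ≤ |k| →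
      p5 α 1 ≤ p5 α k ∧ 5/2 ≤ p5 α 1 :=
  fun _ hα _ hk => ⟨p5_le_p5_of_one_le_abs hα hk, five_halves_le_p5_one hα⟩
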